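/- arXiv:2602.11250 — 5 statements merged into one kernel-verified Lean document; each statement's English description precedes it below -/
import Mathlib

section
/- Fix an integer k ≥ 2, a real h > 0, and an interior index J with 1 ≤ J ≤ k−1. Let x₀ ≤ x₁ ≤ ⋯ ≤ x_k be real numbers, u₀, …, u_k ∈ [0,1], r ≥ 0, and θ ∈ [−π/2, π/2]. Let L be the tuple-optimization path length through all k+1 points, and let L̃ = min{ L , 2h·√(r²cos²θ + (h(1 − u_J) + r·sinθ)²) + min_{ξ ∈ Ξ} ∑_{i=1}^{k−1} √((x_{ξ(i)} − x_{ξ(i−1)})² + h⁴(u_{ξ(i)} − u_{ξ(i−1)})²) }, where Ξ is the set of bijective enumerations ξ(0), ξ(1), …, ξ(k−1) of {0, 1, …, k} \ {J} with ξ(0) = 0 and ξ(k−1) = k. Then x_k − x₀ ≤ L̃ ≤ (x_k − x₀) + k·h². (The band-crossover path length satisfies the same sandwich relation as the tuple-optimization path length.) -/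
open Finset

/-!
Every admissible path runs from `x₀` to `x_k`, and each of its segments is at least as long as its
horizontal displacement, so by telescoping every path length, `L` and the reduced length `L'`
alike, is at least `x_k − x₀`; the crossover cost is nonnegative, so the same holds for
`L̃ = min L (crossover + L')`. Conversely `L̃ ≤ L`, and `L` is at most the length of the path
visiting the points in sorted order, each of whose segments exceeds its horizontal displacement
by at most `h²` since `|u_{i+1} − u_i| ≤ 1`.
-/

theorem Fin.sum_univ_succ_sub_castSucc {M : Type*} [AddCommGroup M] {n : ℕ}
    (f : Fin (n + 1) → M) :
    ∑ i : Fin n, (f i.succ - f i.castSucc) = f (Fin.last n) - f 0 := by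
  induction n with
  | zero => simp
  | succ n ih =>
    rw [Fin.sum_univ_castSucc]
    simp only [Fin.succ_castSucc, ih fun j => f j.castSucc, Fin.succ_last, Fin.castSucc_zero]
    abel

theorem Real.le_sqrt_sq_add_mul_sq (a b : ℝ) {c : ℝ} (hc : 0 ≤ c) :
    a ≤ √(a ^ 2 + c * b ^ 2) :=
  Real.le_sqrt_of_sq_le (le_add_of_nonneg_right (by positivity))

theorem Real.sqrt_sq_add_sq_mul_sq_le {a b c : ℝ} (ha : 0 ≤ a) (hb : |b| ≤ 1) (hc : 0 ≤ c) :
    √(a ^ 2 + c ^ 2 * b ^ 2) ≤ a + c := by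
  have hb2 : b ^ 2 ≤ 1 := by nlinarith [sq_abs b, abs_nonneg b]
  refine Real.sqrt_le_iff.2 ⟨by positivity, ?_⟩
  nlinarith [mul_le_mul_of_nonneg_left hb2 (sq_nonneg c), mul_nonneg ha hc]

section PathLength

variable {ι : Type*} (x u : ι → ℝ) (h : ℝ)

/-- Length of the polygonal path through the points `(x (w i), h² u (w i))`, `i = 0, …, n`. -/
noncomputable def pathLength {n : ℕ} (w : Fin (n + 1) → ι) : ℝ :=
  ∑ i : Fin n, √((x (w i.succ) - x (w i.castSucc)) ^ 2 +
    h ^ 4 * (u (w i.succ) - u (w i.castSucc)) ^ 2)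

theorem sub_le_pathLength {n : ℕ} (w : Fin (n + 1) → ι) :
    x (w (Fin.last n)) - x (w 0) ≤ pathLength x u h w := by
  calc x (w (Fin.last n)) - x (w 0)
      = ∑ i : Fin n, (x (w i.succ) - x (w i.castSucc)) :=
        (Fin.sum_univ_succ_sub_castSucc fun i => x (w i)).symm
    _ ≤ pathLength x u h w :=
        sum_le_sum fun i _ => Real.le_sqrt_sq_add_mul_sq _ _ (by positivity)

variable {x u}

theorem pathLength_le_of_monotone {n : ℕ} {w : Fin (n + 1) → ι} (hx : Monotone (x ∘ w))
    (hu : ∀ i, u i ∈ Set.Icc (0 : ℝ) 1) :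
    pathLength x u h w ≤ x (w (Fin.last n)) - x (w 0) + n * h ^ 2 := by
  have hseg : ∀ i : Fin n, √((x (w i.succ) - x (w i.castSucc)) ^ 2 +
      h ^ 4 * (u (w i.succ) - u (w i.castSucc)) ^ 2) ≤
      (x (w i.succ) - x (w i.castSucc)) + h ^ 2 := by
    intro i
    have hdu : |u (w i.succ) - u (w i.castSucc)| ≤ 1 := by
      obtain ⟨h0, h1⟩ := hu (w i.succ)
      obtain ⟨h0', h1'⟩ := hu (w i.castSucc)
      exact abs_sub_le_iff.2 ⟨by linarith, by linarith⟩
    rw [show h ^ 4 = (h ^ 2) ^ 2 by ring]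
    exact Real.sqrt_sq_add_sq_mul_sq_le (sub_nonneg.2 (hx (Fin.castSucc_le_succ i))) hdu
      (by positivity)
  calc pathLength x u h w
      ≤ ∑ i : Fin n, ((x (w i.succ) - x (w i.castSucc)) + h ^ 2) :=
        sum_le_sum fun i _ => hseg i
    _ = x (w (Fin.last n)) - x (w 0) + n * h ^ 2 := by
        rw [sum_add_distrib, Fin.sum_univ_succ_sub_castSucc fun i => x (w i)]
        simp

end PathLength

/-- The band-crossover path length `L̃ = min{L, 2h·√(r²cos²θ + (h(1−u_J)+r·sinθ)²) + L'}`,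
where `L` is the tuple-optimization path length through all `k+1` points and `L'` is the
optimal path length through the `k` points `{0, …, k} \ {J}` (from `0` to `k`), satisfies
the same sandwich relation `x_k − x₀ ≤ L̃ ≤ x_k − x₀ + k·h²`. -/
theorem band_crossover_sandwich
    (k : ℕ) (hk : 2 ≤ k) (h : ℝ) (hh : 0 < h)
    (J : Fin (k + 1))
    (x u : Fin (k + 1) → ℝ) (hx : Monotone x)
    (hu : ∀ i, u i ∈ Set.Icc (0 : ℝ) 1)
    (r : ℝ)
    (θ : ℝ)
    (L : ℝ)
    (hL : IsLeast
      {y : ℝ | ∃ π : Equiv.Perm (Fin (k + 1)),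
        π 0 = 0 ∧ π (Fin.last k) = Fin.last k ∧
        y = ∑ i : Fin k,
          Real.sqrt ((x (π i.succ) - x (π i.castSucc)) ^ 2 +
            h ^ 4 * (u (π i.succ) - u (π i.castSucc)) ^ 2)} L)
    (L' : ℝ)
    (hL' : IsLeast
      {y : ℝ | ∃ ξ : Fin k → Fin (k + 1),
        Function.Injective ξ ∧
        (∀ j : Fin (k + 1), j ∈ Set.range ξ ↔ j ≠ J) ∧
        ξ ⟨0, by omega⟩ = 0 ∧ ξ ⟨k - 1, by omega⟩ = Fin.last k ∧
        y = ∑ i : Fin (k - 1),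
          Real.sqrt ((x (ξ ⟨i.1 + 1, by have := i.2; omega⟩) -
              x (ξ ⟨i.1, by have := i.2; omega⟩)) ^ 2 +
            h ^ 4 * (u (ξ ⟨i.1 + 1, by have := i.2; omega⟩) -
              u (ξ ⟨i.1, by have := i.2; omega⟩)) ^ 2)} L')
    (Lt : ℝ)
    (hLt : Lt = min L
      (2 * h * Real.sqrt ((r * Real.cos θ) ^ 2 +
        (h * (1 - u J) + r * Real.sin θ) ^ 2) + L')) :
    x (Fin.last k) - x 0 ≤ Lt ∧ Lt ≤ (x (Fin.last k) - x 0) + k * h ^ 2 := by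
  obtain ⟨π, hπ0, hπk, hLπ⟩ := hL.1
  have hL_ge : x (Fin.last k) - x 0 ≤ L := by
    simpa only [pathLength, hLπ, hπ0, hπk] using sub_le_pathLength x u h π
  obtain ⟨ξ, -, -, hξ0, hξk, hL'ξ⟩ := hL'.1
  have hL'_ge : x (Fin.last k) - x 0 ≤ L' := by
    -- reindexed by `Fin (k - 1 + 1)`, `ξ` is a path whose `pathLength` is the sum in `hL'ξ`
    have hpath := sub_le_pathLength x u h (ξ ∘ Fin.cast (by omega : k - 1 + 1 = k))
    simpa only [hL'ξ] using hξ0 ▸ hξk ▸ hpath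
  have hL_le : L ≤ x (Fin.last k) - x 0 + k * h ^ 2 :=
    (hL.2 ⟨Equiv.refl _, rfl, rfl, rfl⟩).trans (pathLength_le_of_monotone h hx hu)
  have hcrossover : 0 ≤ 2 * h * √((r * Real.cos θ) ^ 2 + (h * (1 - u J) + r * Real.sin θ) ^ 2) := by
    positivity
  subst hLt
  exact ⟨le_min hL_ge (by linarith), (min_le_left _ _).trans hL_le⟩
end

section
/- Fix integers k ≥ 1 and M ≥ 1 and a real h > 0. On a probability space, let (G₁, B₁), …, (G_M, B_M) be i.i.d. pairs of real random variables such that G₁ has the Gamma distribution with shape k and rate 1, and 0 ≤ B₁ ≤ k·h² almost surely. Set L_i = G_i + B_i, β̂ = (1/(M·k·h))·∑_{i=1}^{M} L_i, and β̄ = E[L₁]/(k·h). Then for every δ ∈ (0,1), with t = log(4/δ) and ε = (1/(k·h))·( √(2kt/M) + t/M + k·h²·√(t/(2M)) ), one has P( |β̂ − β̄| ≥ ε ) ≤ δ. -/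
/-!
After multiplication by `M k h`, the estimation error is `(∑ Gᵢ - kM) + ∑ (Bᵢ - E Bᵢ)`.
The first sum is `Gamma(kM, 1)`-distributed, so its cumulant generating function
`-kM (log (1 - s) + s)` is sub-gamma, and the Chernoff bound gives the Bernstein-type deviation
`√(2kMt) + t` outside an event of probability `2 e^{-t}`. The second is a sum of `M` independent
centred variables with range `k h²`, so Hoeffding's inequality gives the deviation
`k h² √(Mt/2)` outside an event of probability `2 e^{-t}`. The union bound yields
`4 e^{-t} = δ`.
-/

open MeasureTheory ProbabilityTheory Real Set Finset

namespace Real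

lemma log_le_sub_inv_div_two {z : ℝ} (hz : 1 ≤ z) : log z ≤ (z - z⁻¹) / 2 := by
  have := self_le_sinh_iff.2 (log_nonneg hz)
  rwa [sinh_eq, exp_neg, exp_log (by linarith)] at this

lemma sub_sq_div_two_le_log_one_add {x : ℝ} (hx : 0 ≤ x) : x - x ^ 2 / 2 ≤ log (1 + x) := by
  refine le_trans ?_ (le_log_one_add_of_nonneg hx)
  rw [le_div_iff₀ (by linarith)]
  nlinarith [pow_nonneg hx 3]

lemma mul_sqrt_div_self {a : ℝ} (ha : 0 ≤ a) (b : ℝ) : a * √(b / a) = √(a * b) := by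
  rcases ha.eq_or_lt with rfl | ha
  · simp
  · rw [← sqrt_sq ha.le, ← sqrt_mul (sq_nonneg a), sqrt_sq ha.le]
    congr 1
    field_simp

end Real

namespace ProbabilityTheory

section Gamma

variable {a r : ℝ}

lemma integral_gammaMeasure_eq_setIntegral (ha : 0 < a) (hr : 0 < r) (g : ℝ → ℝ) :
    ∫ x, g x ∂gammaMeasure a r = ∫ x in Ioi 0, gammaPDFReal a r x * g x := by
  rw [gammaMeasure, show gammaPDF a r = fun x => ENNReal.ofReal (gammaPDFReal a r x) from rfl,
    integral_withDensity_eq_integral_toReal_smul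
    (measurable_gammaPDFReal a r).ennreal_ofReal (ae_of_all _ fun _ => ENNReal.ofReal_lt_top),
    ← integral_Ici_eq_integral_Ioi,
    ← setIntegral_eq_integral_of_forall_compl_eq_zero (s := Ici 0)]
  · simp only [ENNReal.toReal_ofReal (gammaPDFReal_nonneg ha hr _), smul_eq_mul]
  · intro x hx
    simp [gammaPDFReal, show ¬ 0 ≤ x from hx]

lemma integral_exp_mul_gammaMeasure (ha : 0 < a) (hr : 0 < r) {s : ℝ} (hs : s < r) :
    ∫ x, exp (s * x) ∂gammaMeasure a r = (1 - s / r) ^ (-a) := by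
  have hrs : 0 < r - s := by linarith
  rw [integral_gammaMeasure_eq_setIntegral ha hr, setIntegral_congr_fun measurableSet_Ioi
    (g := fun x => r ^ a / Gamma a * (x ^ (a - 1) * exp (-((r - s) * x)))),
    integral_const_mul, integral_rpow_mul_exp_neg_mul_Ioi ha hrs]
  · rw [show 1 - s / r = (r - s) / r by field_simp, rpow_neg (by positivity),
      div_rpow hrs.le hr.le, one_div, inv_rpow hrs.le]
    field_simp [(Gamma_pos_of_pos ha).ne']
  · intro x hx
    simp only [gammaPDFReal, if_pos (mem_Ioi.1 hx).le]
    rw [mul_assoc, mul_assoc, ← exp_add]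
    ring_nf

lemma integral_id_gammaMeasure (ha : 0 < a) (hr : 0 < r) :
    ∫ x, x ∂gammaMeasure a r = a / r := by
  rw [integral_gammaMeasure_eq_setIntegral ha hr, setIntegral_congr_fun measurableSet_Ioi
    (g := fun x => r ^ a / Gamma a * (x ^ (a + 1 - 1) * exp (-(r * x)))),
    integral_const_mul, integral_rpow_mul_exp_neg_mul_Ioi (by linarith) hr, Gamma_add_one ha.ne',
    one_div, inv_rpow hr.le, rpow_add_one hr.ne']
  · field_simp [(Gamma_pos_of_pos ha).ne']
  · intro x hx
    have hx0 : x ≠ 0 := (mem_Ioi.1 hx).ne'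
    simp only [gammaPDFReal, if_pos (mem_Ioi.1 hx).le, add_sub_cancel_right, rpow_sub_one hx0]
    field_simp

variable {Ω : Type*} [MeasurableSpace Ω] {μ : Measure Ω} {X : Ω → ℝ}

lemma HasLaw.mgf_gammaMeasure (hX : HasLaw X (gammaMeasure a r) μ) (ha : 0 < a) (hr : 0 < r)
    {s : ℝ} (hs : s < r) : mgf X μ s = (1 - s / r) ^ (-a) :=
  (hX.integral_comp (f := fun x => exp (s * x)) (by fun_prop)).trans
    (integral_exp_mul_gammaMeasure ha hr hs)

lemma HasLaw.integral_gammaMeasure (hX : HasLaw X (gammaMeasure a r) μ) (ha : 0 < a)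
    (hr : 0 < r) : μ[X] = a / r :=
  hX.integral_eq.trans (integral_id_gammaMeasure ha hr)

lemma mgf_sum_of_hasLaw_gammaMeasure {ι : Type*} {X : ι → Ω → ℝ} (hindep : iIndepFun X μ)
    (hmeas : ∀ i, Measurable (X i)) (hX : ∀ i, HasLaw (X i) (gammaMeasure a r) μ) (ha : 0 < a)
    (hr : 0 < r) (S : Finset ι) {s : ℝ} (hs : s < r) :
    mgf (∑ i ∈ S, X i) μ s = (1 - s / r) ^ (-(a * #S)) := by
  have h : 0 ≤ 1 - s / r := by rw [sub_nonneg, div_le_one hr]; exact hs.le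
  rw [hindep.mgf_sum hmeas, prod_congr rfl fun i _ => (hX i).mgf_gammaMeasure ha hr hs,
    prod_const, neg_mul_eq_neg_mul, rpow_mul_natCast h]

end Gamma

section SubGammaTails

variable {Ω : Type*} [MeasurableSpace Ω] {μ : Measure Ω} {X : Ω → ℝ} {a v t : ℝ}

lemma integrable_exp_mul_of_mgf_pos {s : ℝ} (h : 0 < mgf X μ s) :
    Integrable (fun ω => exp (s * X ω)) μ :=
  Integrable.of_integral_ne_zero h.ne'

lemma measureReal_ge_le_of_mgf_eq_gamma [IsFiniteMeasure μ] {u : ℝ} (hv : 0 < v) (hu : 0 ≤ u)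
    (hmgf : ∀ s ∈ Ico (0 : ℝ) 1, mgf X μ s = (1 - s) ^ (-v)) :
    μ.real {ω | v + v * u + v * u ^ 2 / 2 ≤ X ω} ≤ exp (-(v * u ^ 2 / 2)) := by
  have hs : u / (1 + u) ∈ Ico (0 : ℝ) 1 :=
    ⟨by positivity, by rw [div_lt_one (by linarith)]; linarith⟩
  -- `u / (1 + u)` minimises the sub-gamma Chernoff exponent
  -- `v s² / (2 (1 - s)) - s (v u + v u² / 2)`
  have hmgf_s : mgf X μ (u / (1 + u)) = exp (v * log (1 + u)) := by
    rw [hmgf _ hs, show 1 - u / (1 + u) = (1 + u)⁻¹ by field_simp; ring, rpow_neg (by positivity),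
      inv_rpow (by positivity), inv_inv, rpow_def_of_pos (by linarith), mul_comm]
  have hlog := log_le_sub_inv_div_two (show 1 ≤ 1 + u by linarith)
  calc μ.real {ω | v + v * u + v * u ^ 2 / 2 ≤ X ω}
      ≤ exp (-(u / (1 + u)) * (v + v * u + v * u ^ 2 / 2)) * mgf X μ (u / (1 + u)) :=
        measure_ge_le_exp_mul_mgf _ hs.1
          (integrable_exp_mul_of_mgf_pos (by rw [hmgf_s]; positivity))
    _ = exp (-(u / (1 + u)) * (v + v * u + v * u ^ 2 / 2) + v * log (1 + u)) := by
        rw [hmgf_s, ← exp_add]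
    _ ≤ exp (-(v * u ^ 2 / 2)) := by
      gcongr
      have hkey : -(u / (1 + u)) * (v + v * u + v * u ^ 2 / 2) + v * ((1 + u - (1 + u)⁻¹) / 2)
          = -(v * u ^ 2 / 2) := by
        field_simp
        ring
      linarith [mul_le_mul_of_nonneg_left hlog hv.le]

lemma measureReal_le_le_of_mgf_eq_gamma [IsFiniteMeasure μ] {u : ℝ} (hv : 0 < v) (hu : 0 ≤ u)
    (hmgf : ∀ s ≤ 0, mgf X μ s = (1 - s) ^ (-v)) :
    μ.real {ω | X ω ≤ v - v * u} ≤ exp (-(v * u ^ 2 / 2)) := by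
  have hmgf_u : mgf X μ (-u) = exp (-(v * log (1 + u))) := by
    rw [hmgf (-u) (by linarith), sub_neg_eq_add, rpow_neg (by positivity),
      rpow_def_of_pos (by linarith), mul_comm, exp_neg]
  have hlog := sub_sq_div_two_le_log_one_add hu
  calc μ.real {ω | X ω ≤ v - v * u}
      ≤ exp (-(-u) * (v - v * u)) * mgf X μ (-u) :=
        measure_le_le_exp_mul_mgf _ (by linarith)
          (integrable_exp_mul_of_mgf_pos (by rw [hmgf_u]; positivity))
    _ = exp (u * (v - v * u) - v * log (1 + u)) := by
        rw [hmgf_u, ← exp_add, neg_neg, ← sub_eq_add_neg]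
    _ ≤ exp (-(v * u ^ 2 / 2)) := by
      gcongr
      nlinarith [mul_le_mul_of_nonneg_left hlog hv.le]

lemma measureReal_abs_sub_ge_le_of_mgf_eq_gamma [IsFiniteMeasure μ] (hv : 0 < v) (ht : 0 ≤ t)
    (hmgf : ∀ s < 1, mgf X μ s = (1 - s) ^ (-v)) :
    μ.real {ω | √(2 * v * t) + t ≤ |X ω - v|} ≤ 2 * exp (-t) := by
  set u := √(2 * t / v)
  have hu : 0 ≤ u := sqrt_nonneg _
  have hvu : √(2 * v * t) = v * u := by
    rw [mul_sqrt_div_self hv.le]; ring_nf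
  have hvu2 : v * u ^ 2 / 2 = t := by
    rw [sq_sqrt (by positivity)]
    field_simp
  have hsub : {ω | √(2 * v * t) + t ≤ |X ω - v|} ⊆
      {ω | v + v * u + v * u ^ 2 / 2 ≤ X ω} ∪ {ω | X ω ≤ v - v * u} := by
    intro ω hω
    simp only [mem_ofPred_eq, Set.mem_union, le_abs', hvu] at hω ⊢
    rcases hω with h | h
    · right; linarith
    · left; linarith
  calc μ.real {ω | √(2 * v * t) + t ≤ |X ω - v|}
      ≤ μ.real {ω | v + v * u + v * u ^ 2 / 2 ≤ X ω} + μ.real {ω | X ω ≤ v - v * u} :=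
        (measureReal_mono hsub).trans (measureReal_union_le _ _)
    _ ≤ exp (-t) + exp (-t) := by
        rw [← hvu2]
        gcongr
        · exact measureReal_ge_le_of_mgf_eq_gamma hv hu fun s hs => hmgf s hs.2
        · exact measureReal_le_le_of_mgf_eq_gamma hv hu fun s hs => hmgf s (by linarith)
    _ = 2 * exp (-t) := by ring

lemma measureReal_abs_sum_sub_ge_le_of_hasLaw_gammaMeasure [IsFiniteMeasure μ] {ι : Type*}
    {X : ι → Ω → ℝ} (hindep : iIndepFun X μ) (hmeas : ∀ i, Measurable (X i))
    (hX : ∀ i, HasLaw (X i) (gammaMeasure a 1) μ) (ha : 0 < a) {S : Finset ι} (hS : S.Nonempty)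
    (ht : 0 ≤ t) :
    μ.real {ω | √(2 * (a * #S) * t) + t ≤ |∑ i ∈ S, X i ω - a * #S|} ≤ 2 * exp (-t) := by
  have hmgf (s : ℝ) (hs : s < 1) : mgf (∑ i ∈ S, X i) μ s = (1 - s) ^ (-(a * #S)) := by
    simpa using mgf_sum_of_hasLaw_gammaMeasure hindep hmeas hX ha one_pos S hs
  simpa only [Finset.sum_apply] using
    measureReal_abs_sub_ge_le_of_mgf_eq_gamma (by have := hS.card_pos; positivity) ht hmgf

end SubGammaTails

section Concentration

variable {Ω : Type*} [MeasurableSpace Ω] {μ : Measure Ω}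

lemma measureReal_abs_add_ge_le [IsFiniteMeasure μ] (X Y : Ω → ℝ) (a b : ℝ) :
    μ.real {ω | a + b ≤ |X ω + Y ω|} ≤ μ.real {ω | a ≤ |X ω|} + μ.real {ω | b ≤ |Y ω|} := by
  refine (measureReal_mono fun ω hω => ?_).trans (measureReal_union_le _ _)
  by_contra hn
  simp only [mem_ofPred_eq, Set.mem_union, not_or, not_le] at hω hn
  linarith [abs_add_le (X ω) (Y ω)]

lemma measureReal_abs_sum_sub_integral_ge_le [IsProbabilityMeasure μ] {ι : Type*}
    {X : ι → Ω → ℝ} (hindep : iIndepFun X μ) (hmeas : ∀ i, AEMeasurable (X i) μ) {a b : ℝ}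
    (hab : a < b) (hX : ∀ i, ∀ᵐ ω ∂μ, X i ω ∈ Icc a b) {s : Finset ι} (hs : s.Nonempty) {t : ℝ}
    (ht : 0 ≤ t) :
    μ.real {ω | (b - a) * √(#s * t / 2) ≤ |∑ i ∈ s, (X i ω - μ[X i])|} ≤ 2 * exp (-t) := by
  set ε := (b - a) * √(#s * t / 2)
  have hε : 0 ≤ ε := mul_nonneg (by linarith) (sqrt_nonneg _)
  have hsubG (i : ι) : HasSubgaussianMGF (fun ω => X i ω - μ[X i]) ((‖b - a‖₊ / 2) ^ 2) μ :=
    hasSubgaussianMGF_of_mem_Icc (hmeas i) (hX i)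
  have hindep_pos : iIndepFun (fun i ω => X i ω - μ[X i]) μ :=
    hindep.comp (fun i x => x - ∫ ω, X i ω ∂μ) fun _ => measurable_id.sub_const _
  have hindep_neg : iIndepFun (fun i ω => -(X i ω - μ[X i])) μ :=
    hindep.comp (fun i x => -(x - ∫ ω, X i ω ∂μ)) fun _ => (measurable_id.sub_const _).neg
  have hupper := HasSubgaussianMGF.measure_sum_ge_le_of_iIndepFun hindep_pos
    (s := s) (fun i _ => hsubG i) hε
  have hlower := HasSubgaussianMGF.measure_sum_ge_le_of_iIndepFun hindep_neg
    (s := s) (fun i _ => (hsubG i).neg) hε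
  have hexp : exp (-ε ^ 2 / (2 * ((∑ _i ∈ s, (‖b - a‖₊ / 2) ^ 2 : NNReal) : ℝ))) = exp (-t) := by
    have : (0 : ℝ) < #s := by exact_mod_cast hs.card_pos
    congr 1
    push_cast
    rw [sum_const, nsmul_eq_mul, norm_eq_abs, div_pow, sq_abs, mul_pow, sq_sqrt (by positivity)]
    field_simp [(sub_pos.2 hab).ne']
  have hsub : {ω | ε ≤ |∑ i ∈ s, (X i ω - μ[X i])|} ⊆
      {ω | ε ≤ ∑ i ∈ s, (X i ω - μ[X i])} ∪ {ω | ε ≤ ∑ i ∈ s, -(X i ω - μ[X i])} := by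
    intro ω hω
    simpa only [mem_ofPred_eq, Set.mem_union, le_abs, sum_neg_distrib] using hω
  calc μ.real {ω | ε ≤ |∑ i ∈ s, (X i ω - μ[X i])|}
      ≤ μ.real {ω | ε ≤ ∑ i ∈ s, (X i ω - μ[X i])}
        + μ.real {ω | ε ≤ ∑ i ∈ s, -(X i ω - μ[X i])} :=
        (measureReal_mono hsub).trans (measureReal_union_le _ _)
    _ ≤ 2 * exp (-t) := by
        rw [hexp] at hupper hlower
        linarith

lemma measureReal_abs_sum_add_sub_ge_le [IsProbabilityMeasure μ] {ι : Type*} [Fintype ι]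
    [Nonempty ι] {G B : ι → Ω → ℝ} (hmeas : ∀ i, Measurable fun ω => (G i ω, B i ω))
    (hindep : iIndepFun (fun i ω => (G i ω, B i ω)) μ) {a c t : ℝ} (ha : 0 < a) (hc : 0 < c)
    (hG : ∀ i, HasLaw (G i) (gammaMeasure a 1) μ) (hB : ∀ i, ∀ᵐ ω ∂μ, B i ω ∈ Icc 0 c)
    (ht : 0 ≤ t) :
    μ.real {ω | √(2 * (a * Fintype.card ι) * t) + t + c * √(Fintype.card ι * t / 2)
      ≤ |∑ i, (G i ω + B i ω) - ∑ i, (a + μ[B i])|} ≤ 4 * exp (-t) := by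
  have hGdev := measureReal_abs_sum_sub_ge_le_of_hasLaw_gammaMeasure
    (hindep.comp (fun _ => Prod.fst) fun _ => measurable_fst)
    (fun i => measurable_fst.comp (hmeas i)) hG ha univ_nonempty ht
  have hBdev := measureReal_abs_sum_sub_integral_ge_le
    (hindep.comp (fun _ => Prod.snd) fun _ => measurable_snd)
    (fun i => (measurable_snd.comp (hmeas i)).aemeasurable) hc hB univ_nonempty ht
  rw [card_univ] at hGdev hBdev
  rw [sub_zero] at hBdev
  have hsplit (ω : Ω) : ∑ i, (G i ω + B i ω) - ∑ i, (a + μ[B i])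
      = (∑ i, G i ω - a * Fintype.card ι) + ∑ i, (B i ω - μ[B i]) := by
    simp only [sum_add_distrib, sum_sub_distrib, sum_const, card_univ, nsmul_eq_mul]
    ring
  simp only [hsplit]
  calc _ ≤ _ := measureReal_abs_add_ge_le _ _ _ _
    _ ≤ 2 * exp (-t) + 2 * exp (-t) := add_le_add hGdev hBdev
    _ = 4 * exp (-t) := by ring

end Concentration

end ProbabilityTheory

/-- Concentration of the Monte Carlo estimator `β̂ = (1/(Mkh))·∑ᵢ Lᵢ` of
`β̄ = E[L₁]/(kh)`, where `Lᵢ = Gᵢ + Bᵢ` with `(Gᵢ, Bᵢ)` i.i.d., `G₁ ~ Gamma(k, 1)`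
and `0 ≤ B₁ ≤ k·h²` a.s.  For `δ ∈ (0,1)`, `t = log(4/δ)` and
`ε = (1/(kh))·(√(2kt/M) + t/M + kh²·√(t/(2M)))`, we have `P(|β̂ − β̄| ≥ ε) ≤ δ`. -/
theorem monte_carlo_concentration
    {Ω : Type*} [MeasurableSpace Ω] (μ : Measure Ω) [IsProbabilityMeasure μ]
    (k M : ℕ) (hk : 1 ≤ k) (hM : 1 ≤ M) (h : ℝ) (hh : 0 < h)
    (G B : Fin M → Ω → ℝ)
    (hmeas : ∀ i, Measurable fun ω => (G i ω, B i ω))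
    (hindep : iIndepFun (fun i ω => (G i ω, B i ω)) μ)
    (hident : ∀ i, Measure.map (fun ω => (G i ω, B i ω)) μ =
      Measure.map (fun ω => (G ⟨0, hM⟩ ω, B ⟨0, hM⟩ ω)) μ)
    (hG : Measure.map (G ⟨0, hM⟩) μ = gammaMeasure k 1)
    (hB : ∀ᵐ ω ∂μ, 0 ≤ B ⟨0, hM⟩ ω ∧ B ⟨0, hM⟩ ω ≤ k * h ^ 2)
    (δ : ℝ) (hδ : δ ∈ Set.Ioo (0 : ℝ) 1)
    (t ε : ℝ) (ht : t = Real.log (4 / δ))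
    (hε : ε = (1 / (k * h)) *
      (Real.sqrt (2 * k * t / M) + t / M + k * h ^ 2 * Real.sqrt (t / (2 * M)))) :
    μ {ω | ε ≤ |(1 / (M * k * h)) * (∑ i : Fin M, (G i ω + B i ω)) -
        (∫ ω', (G ⟨0, hM⟩ ω' + B ⟨0, hM⟩ ω') ∂μ) / (k * h)|} ≤ ENNReal.ofReal δ := by
  set i0 : Fin M := ⟨0, hM⟩
  have hk0 : (0 : ℝ) < k := by exact_mod_cast hk
  have hM0 : (0 : ℝ) < M := by exact_mod_cast hM
  have ht0 : 0 ≤ t := ht ▸ log_nonneg ((le_div_iff₀ hδ.1).2 (by linarith [hδ.2]))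
  have hlaw (i : Fin M) :
      IdentDistrib (fun ω => (G i ω, B i ω)) (fun ω => (G i0 ω, B i0 ω)) μ μ :=
    ⟨(hmeas i).aemeasurable, (hmeas i0).aemeasurable, hident i⟩
  have hGlaw (i : Fin M) : HasLaw (G i) (gammaMeasure k 1) μ :=
    ⟨(measurable_fst.comp (hmeas i)).aemeasurable, ((hlaw i).comp measurable_fst).map_eq.trans hG⟩
  have hBbd (i : Fin M) : ∀ᵐ ω ∂μ, B i ω ∈ Icc 0 (k * h ^ 2) :=
    ((hlaw i).comp measurable_snd).symm.ae_mem_snd measurableSet_Icc hB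
  have hBmean (i : Fin M) : μ[B i] = μ[B i0] := ((hlaw i).comp measurable_snd).integral_eq
  have : Nonempty (Fin M) := ⟨i0⟩
  have hdev := measureReal_abs_sum_add_sub_ge_le hmeas hindep hk0 (by positivity) hGlaw hBbd ht0
  rw [Fintype.card_fin] at hdev
  have hmean : ∫ ω, (G i0 ω + B i0 ω) ∂μ = k + μ[B i0] := by
    have hGi0 := (hGlaw i0).integral_gammaMeasure hk0 one_pos
    rw [integral_add (f := G i0) (g := B i0) (.of_integral_ne_zero (by rw [hGi0]; positivity))
      (.of_mem_Icc 0 _ (hmeas i0).aemeasurable.snd (hBbd i0)), hGi0, div_one]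
  have hthr : ε * (M * k * h) = √(2 * (k * M) * t) + t + k * h ^ 2 * √(M * t / 2) := by
    have e1 : M * √(2 * k * t / M) = √(2 * (k * M) * t) := by
      rw [mul_sqrt_div_self hM0.le]; ring_nf
    have e2 : M * √(t / (2 * M)) = √(M * t / 2) := by
      rw [show t / (2 * M) = t / 2 / M by ring, mul_sqrt_div_self hM0.le, mul_div_assoc]
    rw [hε, ← e1, ← e2]
    field_simp
  have hevent : {ω | ε ≤ |(1 / (M * k * h)) * (∑ i : Fin M, (G i ω + B i ω)) -
        (∫ ω', (G i0 ω' + B i0 ω') ∂μ) / (k * h)|}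
      = {ω | √(2 * (k * M) * t) + t + k * h ^ 2 * √(M * t / 2)
          ≤ |∑ i, (G i ω + B i ω) - ∑ i, ((k : ℝ) + μ[B i])|} := by
    ext ω
    have hden : (0 : ℝ) < M * k * h := by positivity
    have hscale : (1 / (M * k * h)) * (∑ i : Fin M, (G i ω + B i ω)) -
        (∫ ω', (G i0 ω' + B i0 ω') ∂μ) / (k * h)
        = (∑ i, (G i ω + B i ω) - ∑ i, ((k : ℝ) + μ[B i])) / (M * k * h) := by
      simp only [hmean, hBmean, sum_const, card_univ, Fintype.card_fin, nsmul_eq_mul]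
      field_simp
    rw [mem_ofPred_eq, mem_ofPred_eq, hscale, abs_div, abs_of_pos hden, le_div_iff₀ hden, hthr]
  rw [hevent, ← ofReal_measureReal]
  refine ENNReal.ofReal_le_ofReal (hdev.trans_eq ?_)
  rw [ht, exp_neg, exp_log (div_pos four_pos hδ.1)]
  field_simp
end

section
/- For all real numbers A, B, C, D ≥ 0, the triangle excess in the Case 1 configuration satisfies √(A² + (C+D)²) + √(C² + B²) − √(D² + (A+B)²) ≥ √2·C − ((√2 − 1)/√2)·(A + B). -/
/-!
Convexity of `y ↦ √(A² + y²)` gives `√(A² + (C+D)²) - √(A² + C²) ≥ √(A² + D²) - A`, and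
`x ↦ √(x² + D²) - x` is decreasing, so the excess is at least `√(A² + C²) + √(C² + B²) - (A + B)`.
The quadratic-mean bound `√(x² + y²) ≥ (x + y)/√2` on the two remaining roots finishes the proof.
-/

namespace Real

theorem sqrt_sq_add_sq_add_sqrt_sq_add_sq_le {a c d : ℝ} (ha : 0 ≤ a) (hc : 0 ≤ c) (hd : 0 ≤ d) :
    √(a ^ 2 + c ^ 2) + √(a ^ 2 + d ^ 2) ≤ √(a ^ 2 + (c + d) ^ 2) + a := by
  have hs : √(a ^ 2 + (c + d) ^ 2) ^ 2 = a ^ 2 + (c + d) ^ 2 := sq_sqrt (by positivity)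
  have hcd : √(a ^ 2 + c ^ 2) * √(a ^ 2 + d ^ 2) ≤ c * d + a * √(a ^ 2 + (c + d) ^ 2) := by
    rw [← sqrt_mul (by positivity), sqrt_le_left (by positivity)]
    nlinarith [mul_nonneg (mul_nonneg (mul_nonneg ha hc) hd) (sqrt_nonneg (a ^ 2 + (c + d) ^ 2)),
      mul_nonneg (mul_nonneg (mul_nonneg ha ha) hc) hd]
  refine (pow_le_pow_iff_left₀ (by positivity) (by positivity) two_ne_zero).1 ?_
  rw [add_sq, add_sq, sq_sqrt (by positivity), sq_sqrt (by positivity), hs]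
  nlinarith

theorem sqrt_sq_add_sq_sub_le_of_le {x y d : ℝ} (hxy : x ≤ y) :
    √(y ^ 2 + d ^ 2) - y ≤ √(x ^ 2 + d ^ 2) - x := by
  have hx : x ≤ √(x ^ 2 + d ^ 2) := le_sqrt_of_sq_le (by nlinarith)
  have hs : √(x ^ 2 + d ^ 2) ^ 2 = x ^ 2 + d ^ 2 := sq_sqrt (by positivity)
  rw [sub_le_iff_le_add, sub_add_comm, sqrt_le_left (by linarith [sqrt_nonneg (x ^ 2 + d ^ 2)])]
  nlinarith

theorem add_div_sqrt_two_le_sqrt_sq_add_sq (x y : ℝ) : (x + y) / √2 ≤ √(x ^ 2 + y ^ 2) := by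
  refine le_sqrt_of_sq_le ?_
  rw [div_pow, sq_sqrt zero_le_two]
  linarith [sq_nonneg (x - y)]

end Real

/-- Uniform lower bound on the Case 1 triangle excess:
`√(A² + (C+D)²) + √(C² + B²) − √(D² + (A+B)²) ≥ √2·C − ((√2 − 1)/√2)·(A + B)`. -/
theorem case1_triangle_excess_lower_bound
    (A B C D : ℝ) (hA : 0 ≤ A) (hB : 0 ≤ B) (hC : 0 ≤ C) (hD : 0 ≤ D) :
    Real.sqrt 2 * C - ((Real.sqrt 2 - 1) / Real.sqrt 2) * (A + B) ≤
      Real.sqrt (A ^ 2 + (C + D) ^ 2) + Real.sqrt (C ^ 2 + B ^ 2) -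
        Real.sqrt (D ^ 2 + (A + B) ^ 2) := by
  have hconv := Real.sqrt_sq_add_sq_add_sqrt_sq_add_sq_le hA hC hD
  have hmono := Real.sqrt_sq_add_sq_sub_le_of_le (d := D) (le_add_of_nonneg_right hB : A ≤ A + B)
  have hAC := Real.add_div_sqrt_two_le_sqrt_sq_add_sq A C
  have hCB := Real.add_div_sqrt_two_le_sqrt_sq_add_sq C B
  have hrhs : √2 * C - ((√2 - 1) / √2) * (A + B) = (A + C) / √2 + (C + B) / √2 - (A + B) := by
    field_simp
    rw [Real.sq_sqrt zero_le_two]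
    ring
  rw [hrhs, add_comm (D ^ 2)]
  linarith
end

section
/- Fix real numbers A, B, C ≥ 0. The function D ↦ √(A² + (C+D)²) + √(C² + B²) − √(D² + (A+B)²) is monotone nondecreasing in D on [0, ∞). In particular, its value at any D ≥ 0 is at least its value at D = 0, namely √(A² + C²) + √(C² + B²) − (A + B). -/
/-!
The constant `√(C² + B²)` is irrelevant, so it suffices that `D ↦ √(p² + (c + D)²) − √(q² + D²)`
is nondecreasing for `c ≥ 0` and `p² ≤ q²` (here `p = A`, `q = A + B`). Its derivative is
`(c + D)/√(p² + (c + D)²) − D/√(q² + D²)`, which is nonnegative because `t ↦ t/√(s + t²)`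
increases in `t ≥ 0` and decreases in `s ≥ 0`.
-/

open Set

lemma div_sqrt_add_sq_le_div_sqrt_add_sq {a b x y : ℝ} (hx : 0 < x) (hxy : x ≤ y)
    (hb : 0 ≤ b) (hba : b ≤ a) :
    x / √(a + x ^ 2) ≤ y / √(b + y ^ 2) := by
  have hy : 0 < y := hx.trans_le hxy
  have hxa : 0 < a + x ^ 2 := by nlinarith
  have hyb : 0 < b + y ^ 2 := by positivity
  rw [← pow_le_pow_iff_left₀ (by positivity) (by positivity) two_ne_zero, div_pow, div_pow,
    Real.sq_sqrt hxa.le, Real.sq_sqrt hyb.le, div_le_div_iff₀ hxa hyb]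
  have hxy2 : x ^ 2 ≤ y ^ 2 := pow_le_pow_left₀ hx.le hxy 2
  nlinarith [mul_le_mul hxy2 hba hb (sq_nonneg y)]

lemma hasDerivAt_sqrt_add_sq {a x : ℝ} (h : a + x ^ 2 ≠ 0) :
    HasDerivAt (fun t => √(a + t ^ 2)) (x / √(a + x ^ 2)) x := by
  convert ((hasDerivAt_pow 2 x).const_add a).sqrt h using 1
  field_simp
  norm_num [mul_comm]

lemma monotoneOn_sqrt_sq_add_sq_sub_sqrt_sq_add_sq {p q c : ℝ} (hc : 0 ≤ c)
    (hpq : p ^ 2 ≤ q ^ 2) :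
    MonotoneOn (fun D => √(p ^ 2 + (c + D) ^ 2) - √(q ^ 2 + D ^ 2)) (Ici 0) := by
  refine monotoneOn_of_hasDerivWithinAt_nonneg (convex_Ici 0) (by fun_prop)
    (f' := fun D => (c + D) / √(p ^ 2 + (c + D) ^ 2) - D / √(q ^ 2 + D ^ 2)) ?_ ?_ <;>
    rw [interior_Ici]
  · intro D (hD : 0 < D)
    have hleft := (hasDerivAt_sqrt_add_sq (a := p ^ 2) (by positivity)).comp_const_add c D
    have hright := hasDerivAt_sqrt_add_sq (a := q ^ 2) (x := D) (by positivity)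
    exact (hleft.sub hright).hasDerivWithinAt
  · intro D (hD : 0 < D)
    exact sub_nonneg.2 <| div_sqrt_add_sq_le_div_sqrt_add_sq hD (by linarith) (sq_nonneg p) hpq

/-- The Case 1 triangle excess `D ↦ √(A² + (C+D)²) + √(C² + B²) − √(D² + (A+B)²)` is
monotone nondecreasing in `D` on `[0, ∞)`; in particular its value at any `D ≥ 0` is at
least its value at `D = 0`, namely `√(A² + C²) + √(C² + B²) − (A + B)`. -/
theorem case1_triangle_excess_monotone
    (A B C : ℝ) (hA : 0 ≤ A) (hB : 0 ≤ B) (hC : 0 ≤ C) :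
    MonotoneOn (fun D : ℝ =>
        Real.sqrt (A ^ 2 + (C + D) ^ 2) + Real.sqrt (C ^ 2 + B ^ 2) -
          Real.sqrt (D ^ 2 + (A + B) ^ 2)) (Set.Ici 0) ∧
    ∀ D : ℝ, 0 ≤ D →
      Real.sqrt (A ^ 2 + C ^ 2) + Real.sqrt (C ^ 2 + B ^ 2) - (A + B) ≤
        Real.sqrt (A ^ 2 + (C + D) ^ 2) + Real.sqrt (C ^ 2 + B ^ 2) -
          Real.sqrt (D ^ 2 + (A + B) ^ 2) := by
  have hAB : A ^ 2 ≤ (A + B) ^ 2 := pow_le_pow_left₀ hA (by linarith) 2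
  have hmono : MonotoneOn (fun D : ℝ =>
      Real.sqrt (A ^ 2 + (C + D) ^ 2) + Real.sqrt (C ^ 2 + B ^ 2) -
        Real.sqrt (D ^ 2 + (A + B) ^ 2)) (Set.Ici 0) := by
    convert (monotoneOn_sqrt_sq_add_sq_sub_sqrt_sq_add_sq hC hAB).add_const √(C ^ 2 + B ^ 2)
      using 2
    ring_nf
  refine ⟨hmono, fun D hD => ?_⟩
  simpa [Real.sqrt_sq (by linarith : 0 ≤ A + B)] using hmono self_mem_Ici hD hD
end

section
/- For all real numbers z > 0 and c > 0, ∫₀¹ ∫₀¹ √( z² + c²·(u − v)² ) du dv = (1/(3c²))·( 3·c·z²·log( (c + √(c² + z²))/z ) + 2·z³ + (c² − 2z²)·√(c² + z²) ). -/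
open intervalIntegral

/-!
Writing `f t = √(z² + t²)`, the double integral `∫₀¹∫₀¹ f (c (u - v)) du dv` only depends on a
second primitive `H` of `f`: integrating twice gives `(H c - 2 H 0 + H (-c)) / c²`. A primitive of
`f` is `G t = (t f t + z² arsinh (t / z)) / 2`, and integrating `G` by parts gives
`H t = (f t ^ 3 / 3 + z² (t arsinh (t / z) - f t)) / 2`, which is even. Finally
`arsinh (c / z) = log ((c + √(c² + z²)) / z)`.
-/

section DoublePrimitive

variable {f G H : ℝ → ℝ}

theorem integral_integral_comp_mul_sub (hf : Continuous f) (hG : ∀ t, HasDerivAt G (f t) t)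
    (hH : ∀ t, HasDerivAt H (G t) t) {c : ℝ} (hc : c ≠ 0) :
    ∫ v in (0 : ℝ)..1, ∫ u in (0 : ℝ)..1, f (c * (u - v)) = (H c - 2 * H 0 + H (-c)) / c ^ 2 := by
  have hinner (v : ℝ) :
      ∫ u in (0 : ℝ)..1, f (c * (u - v)) = (G (c * (1 - v)) - G (c * (0 - v))) / c := by
    have hderiv (u : ℝ) : HasDerivAt (fun u => G (c * (u - v)) / c) (f (c * (u - v))) u := by
      have h := ((hG _).comp u (((hasDerivAt_id u).sub_const v).const_mul c)).div_const c
      simpa [hc] using h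
    rw [integral_eq_sub_of_hasDerivAt (fun u _ => hderiv u)
      (Continuous.intervalIntegrable (by fun_prop) _ _), sub_div]
  have hG_cont : Continuous G := continuous_iff_continuousAt.2 fun t => (hG t).continuousAt
  have hderiv (v : ℝ) : HasDerivAt (fun v => (H (c * (0 - v)) - H (c * (1 - v))) / c ^ 2)
      ((G (c * (1 - v)) - G (c * (0 - v))) / c) v := by
    have hlin (a : ℝ) : HasDerivAt (fun v => c * (a - v)) (-c) v := by
      simpa using ((hasDerivAt_id v).const_sub a).const_mul c
    refine (((hH _).comp v (hlin 0)).sub ((hH _).comp v (hlin 1))).div_const (c ^ 2)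
      |>.congr_deriv ?_
    field_simp
    ring
  rw [integral_congr fun v _ => hinner v,
    integral_eq_sub_of_hasDerivAt (fun v _ => hderiv v)
      (Continuous.intervalIntegrable (by fun_prop) _ _)]
  simp only [sub_self, mul_zero, sub_zero, zero_sub, mul_neg, mul_one]
  ring

end DoublePrimitive

section SqrtPrimitives

open Real

variable {z : ℝ}

theorem hasDerivAt_sqrt_sq_add (hz : z ≠ 0) (t : ℝ) :
    HasDerivAt (fun t => √(z ^ 2 + t ^ 2)) (t / √(z ^ 2 + t ^ 2)) t := by
  have hpos : 0 < z ^ 2 + t ^ 2 := by positivity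
  refine ((hasDerivAt_pow 2 t).const_add (z ^ 2)).sqrt hpos.ne' |>.congr_deriv ?_
  field_simp
  ring

theorem hasDerivAt_arsinh_div (hz : 0 < z) (t : ℝ) :
    HasDerivAt (fun t => arsinh (t / z)) (1 / √(z ^ 2 + t ^ 2)) t := by
  have hsqrt : √(1 + (t / z) ^ 2) = √(z ^ 2 + t ^ 2) / z := by
    rw [show 1 + (t / z) ^ 2 = (z ^ 2 + t ^ 2) / z ^ 2 by field_simp,
      sqrt_div' _ (by positivity), sqrt_sq hz.le]
  refine (hasDerivAt_arsinh _).comp t ((hasDerivAt_id' t).div_const z) |>.congr_deriv ?_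
  have : √(z ^ 2 + t ^ 2) ≠ 0 := by positivity
  rw [hsqrt]
  field_simp

noncomputable def sqrtPrimitive (z t : ℝ) : ℝ :=
  (t * √(z ^ 2 + t ^ 2) + z ^ 2 * arsinh (t / z)) / 2

noncomputable def sqrtSecondPrimitive (z t : ℝ) : ℝ :=
  ((z ^ 2 + t ^ 2) * √(z ^ 2 + t ^ 2) / 3 + z ^ 2 * (t * arsinh (t / z) - √(z ^ 2 + t ^ 2))) / 2

theorem hasDerivAt_sqrtPrimitive (hz : 0 < z) (t : ℝ) :
    HasDerivAt (sqrtPrimitive z) √(z ^ 2 + t ^ 2) t := by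
  have hsq : √(z ^ 2 + t ^ 2) ^ 2 = z ^ 2 + t ^ 2 := sq_sqrt (by positivity)
  have : √(z ^ 2 + t ^ 2) ≠ 0 := by positivity
  refine (((hasDerivAt_id' t).mul (hasDerivAt_sqrt_sq_add hz.ne' t)).add
    ((hasDerivAt_arsinh_div hz t).const_mul (z ^ 2))).div_const 2 |>.congr_deriv ?_
  field_simp
  linear_combination -hsq

theorem hasDerivAt_sqrtSecondPrimitive (hz : 0 < z) (t : ℝ) :
    HasDerivAt (sqrtSecondPrimitive z) (sqrtPrimitive z t) t := by
  have hsq : √(z ^ 2 + t ^ 2) ^ 2 = z ^ 2 + t ^ 2 := sq_sqrt (by positivity)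
  have : √(z ^ 2 + t ^ 2) ≠ 0 := by positivity
  have hs := hasDerivAt_sqrt_sq_add hz.ne' t
  refine ((((hasDerivAt_pow 2 t).const_add (z ^ 2)).mul hs).div_const 3 |>.add
    ((((hasDerivAt_id' t).mul (hasDerivAt_arsinh_div hz t)).sub hs).const_mul (z ^ 2)))
    |>.div_const 2 |>.congr_deriv ?_
  unfold sqrtPrimitive
  field_simp
  linear_combination -t * hsq

theorem sqrtSecondPrimitive_neg (t : ℝ) :
    sqrtSecondPrimitive z (-t) = sqrtSecondPrimitive z t := by
  simp only [sqrtSecondPrimitive, neg_sq, neg_div, arsinh_neg, neg_mul_neg]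

theorem sqrtSecondPrimitive_zero (hz : 0 ≤ z) : sqrtSecondPrimitive z 0 = -z ^ 3 / 3 := by
  simp only [sqrtSecondPrimitive, zero_pow two_ne_zero, add_zero, sqrt_sq hz, zero_mul]
  ring

end SqrtPrimitives

theorem Real.arsinh_div_eq_log {z : ℝ} (hz : 0 < z) (c : ℝ) :
    Real.arsinh (c / z) = Real.log ((c + √(c ^ 2 + z ^ 2)) / z) := by
  rw [Real.arsinh, show 1 + (c / z) ^ 2 = (c ^ 2 + z ^ 2) / z ^ 2 by field_simp; ring,
    Real.sqrt_div' _ (by positivity), Real.sqrt_sq hz.le, add_div]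

/-- The Beardwood–Halton–Hammersley inner double integral:
`∫₀¹∫₀¹ √(z² + c²(u − v)²) du dv
  = (1/(3c²))·(3cz²·log((c + √(c² + z²))/z) + 2z³ + (c² − 2z²)·√(c² + z²))`. -/
theorem bhh_double_integral (z c : ℝ) (hz : 0 < z) (hc : 0 < c) :
    ∫ v in (0 : ℝ)..1, ∫ u in (0 : ℝ)..1, Real.sqrt (z ^ 2 + c ^ 2 * (u - v) ^ 2) =
      (1 / (3 * c ^ 2)) *
        (3 * c * z ^ 2 * Real.log ((c + Real.sqrt (c ^ 2 + z ^ 2)) / z) +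
          2 * z ^ 3 + (c ^ 2 - 2 * z ^ 2) * Real.sqrt (c ^ 2 + z ^ 2)) := by
  have h := integral_integral_comp_mul_sub (f := fun t => √(z ^ 2 + t ^ 2)) (by fun_prop)
    (hasDerivAt_sqrtPrimitive hz) (hasDerivAt_sqrtSecondPrimitive hz) hc.ne'
  simp only [mul_pow] at h
  rw [h, sqrtSecondPrimitive_neg, sqrtSecondPrimitive_zero hz.le, sqrtSecondPrimitive,
    Real.arsinh_div_eq_log hz, add_comm (z ^ 2)]
  field_simp
  ring
end
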